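/- Let P be a finite set and Λ = (λ_p)_{p∈P} strictly positive probabilities. For the Bernoulli product measure μ_Λ on P^ℕ and any two distinct symbols a, b ∈ P with λ_a > λ_b, the set of sequences x such that for all n, #{k ≤ n : x_k = a} > #{k ≤ n : x_k = b} has positive μ_Λ-measure. -/

import Mathlib

/-!
Let `ρ = Λ b / Λ a < 1`. The lead `#a - #b` is a lazy random walk with steps `+1` and `-1` of
probabilities `Λ a` and `Λ b`, and `ρ ^ lead` is a martingale as `Λ a ρ + Λ b ρ⁻¹ = Λ b + Λ a`.
Hence `1 - ρ ^ lead`, stopped when the lead first drops to `0`, is a martingale, with value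
`Λ a (1 - ρ) = Λ a - Λ b` after the first letter. It is at most `1` on sequences in which `a` has
led so far and `0` on the others, so each event "`a` has led up to time `n`" has probability at
least `Λ a - Λ b`; continuity from below, applied to the complements, passes this to the limit.
-/

open scoped Classical
open MeasureTheory Finset

noncomputable section

namespace LeadingSymbol

variable {P : Type*}

section Counting

variable (a b : P)

def count (c : P) (n : ℕ) (x : ℕ → P) : ℕ := #{k ∈ range n | x k = c}

def lead (n : ℕ) (x : ℕ → P) : ℤ := count a n x - count b n x

def Leads (n : ℕ) (x : ℕ → P) : Prop := ∀ m < n, 0 < lead a b (m + 1) x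

def step (c : P) : ℤ := (if c = a then 1 else 0) - (if c = b then 1 else 0)

lemma neg_one_le_step (c : P) : -1 ≤ step a b c := by
  unfold step; split_ifs <;> simp_all

variable {a b}

lemma step_left (hab : a ≠ b) : step a b a = 1 := by simp [step, hab]

lemma step_right (hab : a ≠ b) : step a b b = -1 := by simp [step, hab.symm]

lemma step_of_ne {c : P} (hca : c ≠ a) (hcb : c ≠ b) : step a b c = 0 := by simp [step, hca, hcb]

lemma step_pos_iff (hab : a ≠ b) {c : P} : 0 < step a b c ↔ c = a := by
  unfold step; split_ifs <;> simp_all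

lemma count_succ (c : P) (n : ℕ) (x : ℕ → P) :
    count c (n + 1) x = count c n x + if x n = c then 1 else 0 := by
  unfold count
  rw [range_add_one, filter_insert]
  split_ifs with h
  · rw [card_insert_of_notMem (by simp)]
  · rfl

lemma count_congr {n : ℕ} {x y : ℕ → P} (h : ∀ i < n, x i = y i) (c : P) :
    count c n x = count c n y := by
  unfold count
  congr 1
  exact filter_congr fun k hk => by rw [h k (mem_range.mp hk)]

lemma lead_succ (n : ℕ) (x : ℕ → P) : lead a b (n + 1) x = lead a b n x + step a b (x n) := by
  simp only [lead, step, count_succ]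
  split_ifs <;> push_cast <;> ring

lemma lead_congr {n : ℕ} {x y : ℕ → P} (h : ∀ i < n, x i = y i) :
    lead a b n x = lead a b n y := by
  rw [lead, lead, count_congr h, count_congr h]

lemma lead_zero (x : ℕ → P) : lead a b 0 x = 0 := by simp [lead, count]

lemma leads_zero (x : ℕ → P) : Leads a b 0 x := fun _ hm => absurd hm (Nat.not_lt_zero _)

lemma Leads.mono {m n : ℕ} {x : ℕ → P} (hx : Leads a b n x) (hmn : m ≤ n) : Leads a b m x :=
  fun k hk => hx k (by omega)

lemma leads_succ {n : ℕ} {x : ℕ → P} :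
    Leads a b (n + 1) x ↔ Leads a b n x ∧ 0 < lead a b (n + 1) x := by
  refine ⟨fun h => ⟨h.mono n.le_succ, h n n.lt_succ_self⟩, fun ⟨h, hn⟩ m hm => ?_⟩
  rcases Nat.lt_succ_iff_lt_or_eq.mp hm with hm | rfl
  exacts [h m hm, hn]

lemma leads_congr {n : ℕ} {x y : ℕ → P} (h : ∀ i < n, x i = y i) :
    Leads a b n x ↔ Leads a b n y :=
  forall₂_congr fun m hm => by rw [lead_congr fun i hi => h i (by omega)]

lemma lead_update (n : ℕ) (x : ℕ → P) (c : P) :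
    lead a b (n + 1) (Function.update x n c) = lead a b n x + step a b c := by
  rw [lead_succ, Function.update_self,
    lead_congr fun i hi => Function.update_of_ne (Nat.ne_of_lt hi) c x]

lemma leads_update (n : ℕ) (x : ℕ → P) (c : P) :
    Leads a b (n + 1) (Function.update x n c) ↔ Leads a b n x ∧ 0 < lead a b n x + step a b c := by
  rw [leads_succ, lead_update, leads_congr fun i hi => Function.update_of_ne (Nat.ne_of_lt hi) c x]

end Counting

section Potential

variable (Λ : P → ℝ) (a b : P)

-- With `ρ = Λ b / Λ a`, `1 - ρ ^ k` is the gambler's-ruin probability that the lead, started at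
-- `k`, never returns to `0`.
def potential (n : ℕ) (x : ℕ → P) : ℝ :=
  if Leads a b n x then 1 - (Λ b / Λ a) ^ lead a b n x else 0

variable {Λ a b}

lemma mul_zpow_step (ha : Λ a ≠ 0) (hb : Λ b ≠ 0) (c : P) :
    Λ c * (Λ b / Λ a) ^ step a b c = Λ (Equiv.swap a b c) := by
  rcases eq_or_ne a b with rfl | hab
  · simp [step]
  rcases eq_or_ne c a with rfl | hca
  · rw [step_left hab, zpow_one, Equiv.swap_apply_left, mul_div_cancel₀ _ ha]
  rcases eq_or_ne c b with rfl | hcb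
  · rw [step_right hab, zpow_neg_one, inv_div, Equiv.swap_apply_right, mul_div_cancel₀ _ hb]
  · rw [step_of_ne hca hcb, zpow_zero, mul_one, Equiv.swap_apply_of_ne_of_ne hca hcb]

lemma sum_mul_zpow_step [Fintype P] (ha : Λ a ≠ 0) (hb : Λ b ≠ 0) :
    ∑ c, Λ c * (Λ b / Λ a) ^ step a b c = ∑ c, Λ c := by
  simp_rw [mul_zpow_step ha hb]
  exact Equiv.sum_comp (Equiv.swap a b) Λ

lemma potential_update_of_leads {n : ℕ} (hn : 0 < n) {x : ℕ → P} (hx : Leads a b n x) (c : P) :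
    potential Λ a b (n + 1) (Function.update x n c)
      = 1 - (Λ b / Λ a) ^ (lead a b n x + step a b c) := by
  obtain ⟨m, rfl⟩ : ∃ m, n = m + 1 := ⟨n - 1, by omega⟩
  have hpos : 0 < lead a b (m + 1) x := hx m m.lt_succ_self
  rw [potential, leads_update, lead_update]
  by_cases h : 0 < lead a b (m + 1) x + step a b c
  · rw [if_pos ⟨hx, h⟩]
  · have : lead a b (m + 1) x + step a b c = 0 := by linarith [neg_one_le_step a b c]
    rw [if_neg fun h' => h h'.2, this, zpow_zero, sub_self]

lemma sum_mul_potential_update [Fintype P] (hsum : ∑ p, Λ p = 1) (ha : Λ a ≠ 0) (hb : Λ b ≠ 0)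
    {n : ℕ} (hn : 0 < n) (x : ℕ → P) :
    ∑ c, Λ c * potential Λ a b (n + 1) (Function.update x n c) = potential Λ a b n x := by
  by_cases hx : Leads a b n x
  · set ρ := Λ b / Λ a
    calc ∑ c, Λ c * potential Λ a b (n + 1) (Function.update x n c)
        _ = ∑ c, Λ c - ρ ^ lead a b n x * ∑ c, Λ c * ρ ^ step a b c := by
          simp_rw [potential_update_of_leads hn hx, zpow_add₀ (div_ne_zero hb ha), mul_sum,
            ← sum_sub_distrib]
          exact sum_congr rfl fun c _ => by ring
        _ = potential Λ a b n x := by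
          rw [sum_mul_zpow_step ha hb, hsum, mul_one, potential, if_pos hx]
  · have hzero (c : P) : potential Λ a b (n + 1) (Function.update x n c) = 0 :=
      if_neg fun h => hx ((leads_update n x c).mp h).1
    rw [sum_eq_zero fun c _ => by rw [hzero c, mul_zero], potential, if_neg hx]

lemma potential_one_update (hab : a ≠ b) (x : ℕ → P) (c : P) :
    potential Λ a b 1 (Function.update x 0 c) = if c = a then 1 - Λ b / Λ a else 0 := by
  rw [potential, leads_update, lead_update, lead_zero, zero_add]
  simp only [leads_zero, true_and, step_pos_iff hab]
  split_ifs with hca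
  · rw [hca, step_left hab, zpow_one]
  · rfl

lemma sum_mul_potential_one_update [Fintype P] (hab : a ≠ b) (ha : Λ a ≠ 0) (x : ℕ → P) :
    ∑ c, Λ c * potential Λ a b 1 (Function.update x 0 c) = Λ a - Λ b := by
  simp_rw [potential_one_update hab, mul_ite, mul_zero, Fintype.sum_ite_eq', mul_sub, mul_one,
    mul_div_cancel₀ _ ha]

end Potential

section PrefixExpectation

variable {Λ : P → ℝ} {d : P}

def padWith (d : P) {n : ℕ} (w : Fin n → P) : ℕ → P :=
  fun i => if h : i < n then w ⟨i, h⟩ else d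

-- For `f` depending only on the first `n` letters this is its expectation under the product
-- measure; the padding letter `d` is then immaterial.
variable (Λ d) in
def prefixExpect [Fintype P] (n : ℕ) (f : (ℕ → P) → ℝ) : ℝ :=
  ∑ w : Fin n → P, (∏ i, Λ (w i)) * f (padWith d w)

lemma padWith_of_lt {n i : ℕ} (w : Fin n → P) (hi : i < n) : padWith d w i = w ⟨i, hi⟩ :=
  dif_pos hi

lemma padWith_snoc {n : ℕ} (u : Fin n → P) (c : P) :
    padWith d (Fin.snoc u c : Fin (n + 1) → P) = Function.update (padWith d u) n c := by
  funext i
  rcases lt_trichotomy i n with hi | rfl | hi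
  · rw [padWith_of_lt _ (by omega), Function.update_of_ne hi.ne, padWith_of_lt _ hi]
    exact Fin.snoc_castSucc (α := fun _ => P) (i := ⟨i, hi⟩) ..
  · rw [padWith_of_lt _ i.lt_succ_self, Function.update_self]
    exact Fin.snoc_last (α := fun _ => P) ..
  · simp [padWith, hi.ne', show ¬ i < n + 1 by omega, show ¬ i < n by omega]

variable [Fintype P]

lemma prefixExpect_succ (n : ℕ) (f : (ℕ → P) → ℝ) :
    prefixExpect Λ d (n + 1) f
      = prefixExpect Λ d n fun x => ∑ c, Λ c * f (Function.update x n c) := by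
  rw [prefixExpect, ← (Fin.snocEquiv fun _ => P).sum_comp, Fintype.sum_prod_type_right,
    prefixExpect]
  refine sum_congr rfl fun u _ => ?_
  rw [mul_sum]
  refine sum_congr rfl fun c _ => ?_
  rw [show (Fin.snocEquiv fun _ => P) (c, u) = Fin.snoc u c from rfl, padWith_snoc,
    Fin.prod_univ_castSucc]
  simp only [Fin.snoc_castSucc, Fin.snoc_last]
  ring

lemma prefixExpect_const (hsum : ∑ p, Λ p = 1) (n : ℕ) (r : ℝ) :
    prefixExpect Λ d n (fun _ => r) = r := by
  induction n with
  | zero => simp [prefixExpect]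
  | succ n ih => simp only [prefixExpect_succ, ← sum_mul, hsum, one_mul, ih]

lemma prefixExpect_sub (n : ℕ) (f g : (ℕ → P) → ℝ) :
    prefixExpect Λ d n (fun x => f x - g x) = prefixExpect Λ d n f - prefixExpect Λ d n g := by
  simp only [prefixExpect, mul_sub, sum_sub_distrib]

lemma prefixExpect_mono (hΛ : ∀ p, 0 ≤ Λ p) (n : ℕ) {f g : (ℕ → P) → ℝ} (hfg : ∀ x, f x ≤ g x) :
    prefixExpect Λ d n f ≤ prefixExpect Λ d n g :=
  sum_le_sum fun w _ => mul_le_mul_of_nonneg_left (hfg _) (prod_nonneg fun i _ => hΛ (w i))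

end PrefixExpectation

section Survival

variable {Λ : P → ℝ} {a b : P}

lemma indicator_not_leads_le_one_sub_potential (hpos : ∀ p, 0 < Λ p) (n : ℕ) (x : ℕ → P) :
    {x | ¬Leads a b n x}.indicator 1 x ≤ 1 - potential Λ a b n x := by
  by_cases hx : Leads a b n x
  · have : 0 ≤ (Λ b / Λ a) ^ lead a b n x := zpow_nonneg (div_pos (hpos b) (hpos a)).le _
    simp [potential, hx, this]
  · simp [potential, hx]

variable [Fintype P]

lemma prefixExpect_potential (hsum : ∑ p, Λ p = 1) (hpos : ∀ p, 0 < Λ p) (hab : a ≠ b)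
    (d : P) (n : ℕ) :
    prefixExpect Λ d (n + 1) (potential Λ a b (n + 1)) = Λ a - Λ b := by
  induction n with
  | zero =>
    rw [zero_add, prefixExpect_succ]
    simp_rw [sum_mul_potential_one_update hab (hpos a).ne']
    exact prefixExpect_const hsum 0 _
  | succ n ih =>
    rw [prefixExpect_succ]
    simp_rw [sum_mul_potential_update hsum (hpos a).ne' (hpos b).ne' n.succ_pos]
    exact ih

lemma prefixExpect_not_leads_le (hsum : ∑ p, Λ p = 1) (hpos : ∀ p, 0 < Λ p) (hab : a ≠ b)
    (d : P) (n : ℕ) :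
    prefixExpect Λ d (n + 1) ({x | ¬Leads a b (n + 1) x}.indicator 1) ≤ 1 - (Λ a - Λ b) :=
  calc _ ≤ prefixExpect Λ d (n + 1) (fun x => 1 - potential Λ a b (n + 1) x) :=
        prefixExpect_mono (fun p => (hpos p).le) _ (indicator_not_leads_le_one_sub_potential hpos _)
    _ = 1 - (Λ a - Λ b) := by
        rw [prefixExpect_sub, prefixExpect_const hsum, prefixExpect_potential hsum hpos hab]

end Survival

section Measure

variable [Fintype P] [MeasurableSpace P] {Λ : P → ℝ} {μ : Measure (ℕ → P)}

lemma measure_le_prefixExpect (hΛ : ∀ p, 0 ≤ Λ p)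
    (hcyl : ∀ (s : Finset ℕ) (f : ℕ → P),
      μ {x | ∀ i ∈ s, x i = f i} = ∏ i ∈ s, ENNReal.ofReal (Λ (f i)))
    (d : P) {n : ℕ} {S : Set (ℕ → P)} (hS : ∀ x y, (∀ i < n, x i = y i) → x ∈ S → y ∈ S) :
    μ S ≤ ENNReal.ofReal (prefixExpect Λ d n (S.indicator 1)) := by
  set words := univ.filter fun w : Fin n → P => padWith d w ∈ S
  have hcover : S ⊆ ⋃ w ∈ words, {x | ∀ i ∈ range n, x i = padWith d w i} := by
    intro x hx
    have hagree : ∀ i < n, x i = padWith d (fun j : Fin n => x j) i :=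
      fun i hi => (padWith_of_lt (fun j : Fin n => x j) hi).symm
    exact Set.mem_biUnion (mem_filter.mpr ⟨mem_univ _, hS _ _ hagree hx⟩)
      fun i hi => hagree i (mem_range.mp hi)
  have hweight (w : Fin n → P) : μ {x | ∀ i ∈ range n, x i = padWith d w i}
      = ENNReal.ofReal (∏ i, Λ (w i)) := by
    rw [hcyl, ENNReal.ofReal_prod_of_nonneg fun i _ => hΛ (w i),
      ← Fin.prod_univ_eq_prod_range (fun i => ENNReal.ofReal (Λ (padWith d w i)))]
    exact prod_congr rfl fun i _ => by rw [padWith_of_lt w i.2]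
  calc μ S ≤ ∑ w ∈ words, μ {x | ∀ i ∈ range n, x i = padWith d w i} :=
        (measure_mono hcover).trans (measure_biUnion_finset_le _ _)
    _ = ENNReal.ofReal (∑ w ∈ words, ∏ i, Λ (w i)) := by
        rw [ENNReal.ofReal_sum_of_nonneg fun w _ => prod_nonneg fun i _ => hΛ (w i)]
        exact sum_congr rfl fun w _ => hweight w
    _ = ENNReal.ofReal (prefixExpect Λ d n (S.indicator 1)) := by
        simp [prefixExpect, words, sum_filter, Set.indicator_apply]

end Measure

lemma pos_of_measure_compl_lt_one {α : Type*} [MeasurableSpace α] {μ : Measure α}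
    [IsProbabilityMeasure μ] {s : Set α} (h : μ sᶜ < 1) : 0 < μ s := by
  refine pos_iff_ne_zero.mpr fun hs => h.ne ?_
  rw [Set.compl_eq_univ_sdiff, measure_sdiff_null hs, measure_univ]

end LeadingSymbol

end

open LeadingSymbol in
/-- For a Bernoulli product measure on `P^ℕ` (P a finite alphabet) with strictly
positive marginals Λ, and symbols a ≠ b with Λ a > Λ b, the set of sequences in
which a always strictly leads b in every initial segment has positive measure. -/
theorem stmt_5 (P : Type*) [Fintype P] [MeasurableSpace P]
    (Λ : P → ℝ) (hΛpos : ∀ p, 0 < Λ p) (hΛsum : ∑ p, Λ p = 1)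
    (μ : Measure (ℕ → P)) [IsProbabilityMeasure μ]
    (hcyl : ∀ (s : Finset ℕ) (f : ℕ → P),
      μ {x | ∀ i ∈ s, x i = f i} = ∏ i ∈ s, ENNReal.ofReal (Λ (f i)))
    (a b : P) (hab : a ≠ b) (hfreq : Λ b < Λ a) :
    0 < μ {x | ∀ n : ℕ,
      ((range (n + 1)).filter (fun k => x k = b)).card
        < ((range (n + 1)).filter (fun k => x k = a)).card} := by
  have hcompl : {x | ∀ n : ℕ,
      ((range (n + 1)).filter (fun k => x k = b)).card
        < ((range (n + 1)).filter (fun k => x k = a)).card}ᶜ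
      = ⋃ n, {x | ¬Leads a b (n + 1) x} := by
    ext x
    simp only [Set.mem_compl_iff, Set.mem_ofPred_eq, Set.mem_iUnion, not_forall, Leads, lead,
      count, sub_pos, Nat.cast_lt, not_lt]
    exact ⟨fun ⟨n, hn⟩ => ⟨n, n, n.lt_succ_self, hn⟩, fun ⟨_, m, _, hm⟩ => ⟨m, hm⟩⟩
  have hbad (n : ℕ) : μ {x | ¬Leads a b (n + 1) x} ≤ ENNReal.ofReal (1 - (Λ a - Λ b)) :=
    (measure_le_prefixExpect (fun p => (hΛpos p).le) hcyl a
        fun _ _ hxy => mt (leads_congr hxy).mpr).trans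
      (ENNReal.ofReal_le_ofReal (prefixExpect_not_leads_le hΛsum hΛpos hab a n))
  apply pos_of_measure_compl_lt_one
  rw [hcompl, (fun m n hmn x hx hy => hx (hy.mono (by omega)) : Monotone _).measure_iUnion]
  exact (iSup_le hbad).trans_lt (ENNReal.ofReal_lt_one.mpr (by linarith))
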